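/- For n > k > r, the number of plane trees on n edges with k leaves and root degree r equals (r/n)*C(n,k)*C(n-r-1, n-k-1); and for n = k = r it equals 1. -/

import Mathlib

inductive PlaneTree : Type
  | node : List PlaneTree → PlaneTree

namespace PlaneTree

def edges : PlaneTree → ℕ
  | node ts => (ts.attach.map (fun t => edges t.1)).sum + ts.length
decreasing_by have := List.sizeOf_lt_of_mem t.2; simp [PlaneTree.node.sizeOf_spec]; omega

def leafAux : PlaneTree → ℕ
  | node ts => (if ts.length = 0 then 1 else 0) + (ts.attach.map (fun t => leafAux t.1)).sum
decreasing_by have := List.sizeOf_lt_of_mem t.2; simp [PlaneTree.node.sizeOf_spec]; omega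

def internalAux : PlaneTree → ℕ
  | node ts => (if ts.length = 1 then 1 else 0) + (ts.attach.map (fun t => internalAux t.1)).sum
decreasing_by have := List.sizeOf_lt_of_mem t.2; simp [PlaneTree.node.sizeOf_spec]; omega

/-- number of leaves: non-root vertices of down degree 0 -/
def leaves : PlaneTree → ℕ
  | node ts => (ts.map leafAux).sum

/-- number of internal nodes: non-root vertices of down degree 1 -/
def internals : PlaneTree → ℕ
  | node ts => (ts.map internalAux).sum

def rootDegree : PlaneTree → ℕ
  | node ts => ts.length

end PlaneTree

/-!
Listing the out-degrees met in a preorder traversal of the subtrees of the root sends the trees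
counted by `T_n(k,r)` bijectively to the words `w ∈ ℕⁿ` with sum `n - r` and `k` zeros that are
dominating: `r + w₀ + ⋯ + w_{i-1} - i > 0` for all `i < n`.
By the cycle lemma exactly `r` of the `n` cyclic rotations of any word of length `n` and sum `n - r`
are dominating, so double counting pairs (word, rotation) gives `n T_n(k,r) = r · #words`, and
there are `C(n,k) C(n-r-1, n-k-1)` such words: place the zeros, then split `n - r` into `n - k`
positive parts.

For the cycle lemma, read the word cyclically as a walk with steps `wᵢ - 1 ≥ -1`. It loses `r`
per period, and the rotation starting at `j` is dominating iff time `j + n` is a strict record low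
of the walk. A walk that never steps down by more than one sets a record low exactly once per level
it descends, so there are exactly `r` record lows per period.
-/

open Finset

/-- Reading `w` as the out-degrees in a preorder traversal of a forest of `r` trees,
`r + (w.take i).sum - i` subtrees are still pending after `i` letters. -/
def Dominating (r : ℕ) (w : List ℕ) : Prop := ∀ i < w.length, i < (w.take i).sum + r

instance (r : ℕ) : DecidablePred (Dominating r) := fun _ => by unfold Dominating; infer_instance

namespace PlaneTree

theorem edges_node (ts : List PlaneTree) : (node ts).edges = (ts.map edges).sum + ts.length := by
  rw [edges, List.attach_map_val]

theorem leafAux_node (ts : List PlaneTree) :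
    (node ts).leafAux = (if ts.length = 0 then 1 else 0) + (ts.map leafAux).sum := by
  rw [leafAux, List.attach_map_val]

def children : PlaneTree → List PlaneTree
  | node ts => ts

/-- The preorder degree sequence of a forest. -/
def forestCode : List PlaneTree → List ℕ
  | [] => []
  | node cs :: ts => cs.length :: forestCode (cs ++ ts)
termination_by ts => (ts.map edges).sum + ts.length
decreasing_by simp [edges_node]; omega

@[simp] theorem forestCode_nil : forestCode [] = [] := by rw [forestCode]

theorem forestCode_node_cons (cs ts : List PlaneTree) :
    forestCode (node cs :: ts) = cs.length :: forestCode (cs ++ ts) := by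
  rw [forestCode]

theorem length_forestCode (ts : List PlaneTree) :
    (forestCode ts).length = (ts.map edges).sum + ts.length := by
  induction ts using forestCode.induct with
  | case1 => simp
  | case2 cs ts ih =>
    simp only [forestCode_node_cons, List.length_cons, ih, List.map_append, List.sum_append,
      List.length_append, List.map_cons, List.sum_cons, edges_node]
    omega

theorem sum_forestCode (ts : List PlaneTree) : (forestCode ts).sum = (ts.map edges).sum := by
  induction ts using forestCode.induct with
  | case1 => simp
  | case2 cs ts ih =>
    simp only [forestCode_node_cons, List.sum_cons, ih, List.map_append, List.sum_append,
      List.map_cons, edges_node]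
    omega

theorem count_zero_forestCode (ts : List PlaneTree) :
    (forestCode ts).count 0 = (ts.map leafAux).sum := by
  induction ts using forestCode.induct with
  | case1 => simp
  | case2 cs ts ih =>
    simp only [forestCode_node_cons, List.count_cons, ih, List.map_append, List.sum_append,
      List.map_cons, List.sum_cons, leafAux_node]
    by_cases h : cs.length = 0 <;> simp [h]; omega

theorem dominating_forestCode (ts : List PlaneTree) : Dominating ts.length (forestCode ts) := by
  induction ts using forestCode.induct with
  | case1 => simp [Dominating]
  | case2 cs ts ih =>
    rw [forestCode_node_cons]
    rintro (_ | i) hi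
    · simp
    · have := ih i (by simpa using hi)
      simp only [List.take_succ_cons, List.sum_cons, List.length_cons, List.length_append] at this ⊢
      omega

theorem forestCode_injective : Function.Injective forestCode := by
  intro ts us h
  induction ts using forestCode.induct generalizing us with
  | case1 =>
    cases us with
    | nil => rfl
    | cons u us => cases u; simp [forestCode_node_cons] at h
  | case2 cs ts ih =>
    cases us with
    | nil => simp [forestCode_node_cons] at h
    | cons u us =>
      cases u with
      | node ds =>
        simp only [forestCode_node_cons, List.cons.injEq] at h
        obtain ⟨rfl, rfl⟩ := List.append_inj (ih h.2) h.1
        rfl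

theorem exists_forestCode_eq (w : List ℕ) (r : ℕ) (hlen : w.length = w.sum + r)
    (hw : Dominating r w) : ∃ ts : List PlaneTree, ts.length = r ∧ forestCode ts = w := by
  induction w generalizing r with
  | nil => exact ⟨[], by simp at hlen; omega, forestCode_nil⟩
  | cons d w ih =>
    have hr : 0 < r := by simpa using hw 0 (by simp)
    obtain ⟨ts, hts, rfl⟩ := ih (r - 1 + d) (by simp at hlen; omega) fun i hi => by
      have := hw (i + 1) (by simpa using hi)
      simp only [List.take_succ_cons, List.sum_cons] at this
      omega
    refine ⟨node (ts.take d) :: ts.drop d, by simp; omega, ?_⟩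
    rw [forestCode_node_cons, List.take_append_drop, List.length_take, min_eq_left (by omega)]

end PlaneTree

section SkipFree

variable (S : ℕ → ℤ)

def IsRecordLow (t : ℕ) : Prop := ∀ m < t, S t < S m

instance : DecidablePred (IsRecordLow S) := fun _ => by unfold IsRecordLow; infer_instance

def prefixMin (t : ℕ) : ℤ := (range (t + 1)).inf' nonempty_range_add_one S

theorem prefixMin_le {m t : ℕ} (h : m ≤ t) : prefixMin S t ≤ S m :=
  inf'_le _ (mem_range.2 (Nat.lt_succ_of_le h))

theorem prefixMin_succ (t : ℕ) : prefixMin S (t + 1) = min (S (t + 1)) (prefixMin S t) := by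
  rw [prefixMin, prefixMin, ← inf'_insert]
  congr 1
  exact range_add_one

theorem isRecordLow_succ_iff (t : ℕ) : IsRecordLow S (t + 1) ↔ S (t + 1) < prefixMin S t := by
  simp [IsRecordLow, prefixMin, lt_inf'_iff]

variable {S}

theorem card_isRecordLow_Ico (hS : ∀ t, S t - 1 ≤ S (t + 1)) {a b : ℕ} (hab : a ≤ b) :
    (#((Ico (a + 1) (b + 1)).filter (IsRecordLow S)) : ℤ) = prefixMin S a - prefixMin S b := by
  induction b, hab using Nat.le_induction with
  | base => simp
  | succ b hab ih =>
    rw [Nat.Ico_succ_right_eq_insert_Ico (by omega), filter_insert, prefixMin_succ]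
    have := prefixMin_le S (le_refl b)
    by_cases hrec : IsRecordLow S (b + 1)
    · rw [isRecordLow_succ_iff] at hrec
      rw [if_pos ((isRecordLow_succ_iff S b).2 hrec), card_insert_of_notMem (by simp), 
        min_eq_left hrec.le]
      push_cast
      have := hS b
      omega
    · rw [isRecordLow_succ_iff, not_lt] at hrec
      rw [if_neg (by rwa [isRecordLow_succ_iff, not_lt]), min_eq_right hrec, ih]

theorem prefixMin_add_of_periodic {n r : ℕ} (hn : 0 < n) (hS : ∀ t, S (t + n) = S t - r) :
    prefixMin S (n + n - 1) = prefixMin S (n - 1) - r := by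
  apply le_antisymm
  · obtain ⟨m, hm, hmin⟩ := exists_mem_eq_inf' (nonempty_range_add_one (n := n - 1)) S
    rw [mem_range] at hm
    rw [show prefixMin S (n - 1) = S m from hmin, ← hS]
    exact prefixMin_le S (by omega)
  · refine le_inf' _ _ fun t ht => ?_
    rw [mem_range] at ht
    rcases lt_or_ge t n with htn | htn
    · have := prefixMin_le S (show t ≤ n - 1 by omega)
      omega
    · obtain ⟨t, rfl⟩ : ∃ t', t = t' + n := ⟨t - n, by omega⟩
      rw [hS]
      have := prefixMin_le S (show t ≤ n - 1 by omega)
      omega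

end SkipFree

def cyclicWalk (w : List ℕ) (t : ℕ) : ℤ := ∑ m ∈ range t, ((w.getD (m % w.length) 0 : ℤ) - 1)

theorem cyclicWalk_succ_ge (w : List ℕ) (t : ℕ) : cyclicWalk w t - 1 ≤ cyclicWalk w (t + 1) := by
  rw [cyclicWalk, cyclicWalk, sum_range_succ]
  omega

theorem cyclicWalk_add (w : List ℕ) (j : ℕ) {i : ℕ} (hi : i ≤ w.length) :
    cyclicWalk w (j + i) = cyclicWalk w j + ((w.rotate j).take i).sum - i := by
  induction i with
  | zero => simp
  | succ i ih =>
    rw [← add_assoc, cyclicWalk, sum_range_succ, ← cyclicWalk, ih (by omega),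
      List.sum_take_succ _ _ (by simpa using hi), List.getElem_rotate,
      List.getD_eq_getElem _ _ (Nat.mod_lt _ (by omega)), add_comm i j]
    push_cast
    ring

theorem cyclicWalk_add_length (w : List ℕ) (t : ℕ) :
    cyclicWalk w (t + w.length) = cyclicWalk w t + w.sum - w.length := by
  rw [cyclicWalk_add w t le_rfl, ← List.length_rotate (n := t), List.take_length,
    (List.rotate_perm w t).sum_eq, List.length_rotate]

theorem dominating_rotate_iff {w : List ℕ} {r j : ℕ} (h : w.length = w.sum + r)
    (hj : j < w.length) :
    Dominating r (w.rotate j) ↔ IsRecordLow (cyclicWalk w) (j + w.length) := by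
  have hper : ∀ t, cyclicWalk w (t + w.length) = cyclicWalk w t - r := fun t => by
    rw [cyclicWalk_add_length]; omega
  have hstep : ∀ i < w.length, (i < ((w.rotate j).take i).sum + r ↔
      cyclicWalk w (j + w.length) < cyclicWalk w (j + i)) := fun i hi => by
    rw [hper, cyclicWalk_add w j hi.le]; omega
  simp only [Dominating, List.length_rotate]
  constructor
  · intro hdom m hm
    rcases le_or_gt j m with hjm | hmj
    · obtain ⟨i, rfl⟩ := Nat.exists_eq_add_of_le hjm
      exact (hstep i (by omega)).1 (hdom i (by omega))
    · have := (hstep (m + w.length - j) (by omega)).1 (hdom _ (by omega))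
      rw [show j + (m + w.length - j) = m + w.length by omega, hper m] at this
      omega
  · exact fun hrec i hi => (hstep i hi).2 (hrec _ (by omega))

theorem card_filter_dominating_rotate_eq {w : List ℕ} {r : ℕ} (h : w.length = w.sum + r) :
    #((range w.length).filter fun j => Dominating r (w.rotate j)) =
      #((Ico w.length (w.length + w.length)).filter (IsRecordLow (cyclicWalk w))) := by
  refine card_nbij' (· + w.length) (· - w.length) ?_ ?_ ?_ ?_
  · intro j hj
    simp only [mem_coe, mem_filter, mem_range, mem_Ico] at hj ⊢
    exact ⟨by omega, (dominating_rotate_iff h hj.1).1 hj.2⟩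
  · intro t ht
    simp only [mem_coe, mem_filter, mem_range, mem_Ico] at ht ⊢
    refine ⟨by omega, (dominating_rotate_iff h (by omega)).2 ?_⟩
    rw [Nat.sub_add_cancel ht.1.1]
    exact ht.2
  · intro j _
    simp
  · intro t ht
    simp only [mem_coe, mem_filter, mem_Ico] at ht
    simp [Nat.sub_add_cancel ht.1.1]

/-- The cycle lemma. -/
theorem card_filter_dominating_rotate (w : List ℕ) (r : ℕ) (h : w.length = w.sum + r) :
    #((range w.length).filter fun j => Dominating r (w.rotate j)) = r := by
  rcases Nat.eq_zero_or_pos w.length with h0 | hpos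
  · simp only [h0, range_zero, filter_empty, card_empty]; omega
  have hper : ∀ t, cyclicWalk w (t + w.length) = cyclicWalk w t - r := fun t => by
    rw [cyclicWalk_add_length]; omega
  have hrec := card_isRecordLow_Ico (cyclicWalk_succ_ge w)
    (show w.length - 1 ≤ w.length + w.length - 1 by omega)
  rw [prefixMin_add_of_periodic hpos hper, Nat.sub_add_cancel hpos,
    Nat.sub_add_cancel (by omega)] at hrec
  rw [card_filter_dominating_rotate_eq h]
  omega

theorem card_mul_card_filter_eq_of_rotate {α : Type*} [DecidableEq α] (W : Finset (List α))
    (P : List α → Prop) [DecidablePred P] {n r : ℕ} (hlen : ∀ w ∈ W, w.length = n)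
    (hrot : ∀ w ∈ W, ∀ j, w.rotate j ∈ W)
    (hcount : ∀ w ∈ W, #((range n).filter fun j => P (w.rotate j)) = r) :
    n * #(W.filter P) = r * #W := by
  have hback : ∀ w ∈ W, ∀ a b, a + b = n → (w.rotate a).rotate b = w := fun w hw a b hab => by
    rw [List.rotate_rotate, hab, ← hlen w hw, List.rotate_length]
  calc n * #(W.filter P)
      = #((W.filter P) ×ˢ range n) := by rw [card_product, card_range, mul_comm]
    _ = #((W ×ˢ range n).filter fun p => P (p.1.rotate p.2)) := by
      refine card_nbij' (fun p => (p.1.rotate (n - p.2), p.2)) (fun p => (p.1.rotate p.2, p.2))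
        ?_ ?_ ?_ ?_
      · rintro ⟨v, j⟩ h
        simp only [mem_coe, mem_filter, mem_product, mem_range] at h ⊢
        obtain ⟨⟨hv, hP⟩, hj⟩ := h
        exact ⟨⟨hrot v hv _, hj⟩, by rwa [hback v hv _ _ (by omega)]⟩
      · rintro ⟨w, j⟩ h
        simp only [mem_coe, mem_filter, mem_product, mem_range] at h ⊢
        obtain ⟨⟨hw, hj⟩, hP⟩ := h
        exact ⟨⟨hrot w hw _, hP⟩, hj⟩
      · rintro ⟨v, j⟩ h
        simp only [mem_coe, mem_filter, mem_product, mem_range] at h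
        simp only [hback v h.1.1 _ _ (Nat.sub_add_cancel h.2.le)]
      · rintro ⟨w, j⟩ h
        simp only [mem_coe, mem_filter, mem_product, mem_range] at h
        simp only [hback w h.1.1 _ _ (Nat.add_sub_cancel' h.1.2.le)]
    _ = ∑ w ∈ W, #((range n).filter fun j => P (w.rotate j)) := by
      simp only [card_filter, sum_product]
    _ = r * #W := by rw [sum_congr rfl hcount, sum_const, smul_eq_mul, mul_comm]

def words (n s k : ℕ) : Finset (List ℕ) :=
  ((Nat.antidiagonalTuple n s).image List.ofFn).filter (·.count 0 = k)

theorem mem_words {w : List ℕ} {n s k : ℕ} :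
    w ∈ words n s k ↔ w.length = n ∧ w.sum = s ∧ w.count 0 = k := by
  simp only [words, mem_filter, mem_image, Nat.mem_antidiagonalTuple]
  constructor
  · rintro ⟨⟨f, rfl, rfl⟩, rfl⟩
    simp [List.sum_ofFn]
  · rintro ⟨rfl, rfl, rfl⟩
    exact ⟨⟨fun i => w[i], by simp [← List.sum_ofFn], List.ofFn_getElem⟩, rfl⟩

def wordsPos (n s k : ℕ) : Finset (List ℕ) := (words n s k).filter (0 < ·.headI)

theorem card_words_succ_succ (n s k : ℕ) :
    #(words (n + 1) s (k + 1)) = #(words n s k) + #(wordsPos (n + 1) s (k + 1)) := by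
  rw [wordsPos, ← card_filter_add_card_filter_not (0 < ·.headI), add_comm]
  congr 1
  refine card_nbij' List.tail (List.cons 0) ?_ ?_ ?_ ?_ <;>
  · intro w hw
    simp only [coe_filter, mem_coe, mem_words] at hw ⊢
    rcases w with _ | ⟨_ | a, w⟩ <;> simp at hw ⊢ <;> omega

theorem words_succ_zero (n s : ℕ) : words (n + 1) s 0 = wordsPos (n + 1) s 0 := by
  refine (filter_true_of_mem fun w hw => ?_).symm
  rw [mem_words] at hw
  rcases w with _ | ⟨_ | a, w⟩ <;> simp_all

theorem card_wordsPos_succ (n s k : ℕ) :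
    #(wordsPos (n + 1) (s + 1) k) = #(words n s k) + #(wordsPos (n + 1) s k) := by
  rw [← card_filter_add_card_filter_not (·.headI = 1)]
  congr 1
  · refine card_nbij' List.tail (List.cons 1) ?_ ?_ ?_ ?_ <;>
    · intro w hw
      simp only [wordsPos, coe_filter, mem_coe, mem_filter, mem_words] at hw ⊢
      rcases w with _ | ⟨_ | _ | a, w⟩ <;> simp at hw ⊢ <;> omega
  · refine card_nbij' (List.modifyHead (· - 1)) (List.modifyHead (· + 1)) ?_ ?_ ?_ ?_ <;>
    · intro w hw
      simp only [wordsPos, coe_filter, mem_filter, mem_words] at hw ⊢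
      rcases w with _ | ⟨_ | _ | a, w⟩ <;> simp at hw ⊢ <;> omega

theorem wordsPos_zero (n k : ℕ) : wordsPos n 0 k = ∅ := by
  refine filter_false_of_mem fun w hw => ?_
  rw [mem_words] at hw
  rcases w with _ | ⟨_ | a, w⟩ <;> simp_all

theorem words_zero (n k : ℕ) : words n 0 k = if k = n then {List.replicate n 0} else ∅ := by
  ext w
  rw [mem_words, List.sum_eq_zero_iff_forall_eq_nat]
  split_ifs with h
  · subst h
    rw [mem_singleton, List.eq_replicate_iff]
    constructor
    · exact fun ⟨hl, hw, _⟩ => ⟨hl, hw⟩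
    · rintro ⟨hl, hw⟩
      exact ⟨hl, hw, by rw [← hl, List.count_eq_length]; exact fun b hb => (hw b hb).symm⟩
  · simp only [notMem_empty, iff_false]
    rintro ⟨rfl, hw, rfl⟩
    exact h (List.count_eq_length.2 fun b hb => (hw b hb).symm)

theorem words_succ_self (n s : ℕ) : words n (s + 1) n = ∅ := by
  refine eq_empty_of_forall_notMem fun w hw => ?_
  obtain ⟨rfl, hs, hc⟩ := mem_words.1 hw
  rw [List.count_eq_length] at hc
  simp [List.sum_eq_zero fun x hx => (hc x hx).symm] at hs

theorem words_eq_empty_of_lt {n s k : ℕ} (h : n < k) : words n s k = ∅ := by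
  refine eq_empty_of_forall_notMem fun w hw => ?_
  obtain ⟨rfl, -, rfl⟩ := mem_words.1 hw
  exact (List.count_le_length).not_gt h

mutual

theorem card_wordsPos (n s k : ℕ) :
    #(wordsPos (n + 1) (s + 1) k) = n.choose k * s.choose (n - k) := by
  rw [card_wordsPos_succ]
  cases s with
  | zero =>
    rw [wordsPos_zero, words_zero]
    rcases lt_trichotomy k n with h | rfl | h
    · simp [h.ne, Nat.choose_eq_zero_of_lt (Nat.sub_pos_of_lt h)]
    · simp
    · simp [h.ne', Nat.choose_eq_zero_of_lt h]
  | succ s =>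
    rw [card_wordsPos n s k]
    rcases lt_trichotomy k n with h | rfl | h
    · obtain ⟨m, rfl⟩ : ∃ m, n = m + 1 := ⟨n - 1, by omega⟩
      rw [card_words m s k (by omega), show m + 1 - k = m - k + 1 by omega, Nat.choose_succ_succ,
        mul_add]
    · simp [words_succ_self]
    · simp [words_eq_empty_of_lt h, Nat.choose_eq_zero_of_lt h]
termination_by (n, s)

theorem card_words : ∀ n s k : ℕ, k ≤ n →
    #(words (n + 1) (s + 1) k) = (n + 1).choose k * s.choose (n - k)
  | n, s, 0, _ => by rw [words_succ_zero, card_wordsPos]; simp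
  | 0, _, _ + 1, hk => absurd hk (by omega)
  | m + 1, s, j + 1, hk => by
    rw [card_words_succ_succ, card_words m s j (by omega), card_wordsPos (m + 1) s (j + 1),
      Nat.choose_succ_succ (m + 1) j, add_mul, show m + 1 - (j + 1) = m - j by omega]
termination_by n s => (n, s + 1)

end

theorem mul_card_filter_dominating {n s r : ℕ} (k : ℕ) (h : n = s + r) :
    n * #((words n s k).filter (Dominating r)) = r * #(words n s k) := by
  refine card_mul_card_filter_eq_of_rotate _ _ (fun w hw => (mem_words.1 hw).1) ?_ ?_
  · intro w hw j
    obtain ⟨hl, hs, hc⟩ := mem_words.1 hw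
    have hp := List.rotate_perm w j
    exact mem_words.2 ⟨hp.length_eq.trans hl, hp.sum_eq.trans hs, (hp.count_eq 0).trans hc⟩
  · intro w hw
    obtain ⟨rfl, rfl, -⟩ := mem_words.1 hw
    exact card_filter_dominating_rotate w r h

namespace PlaneTree

theorem forestCode_mem_filter_dominating_iff {n k r : ℕ} (ts : List PlaneTree) (hr : r ≤ n) :
    forestCode ts ∈ (words n (n - r) k).filter (Dominating r) ↔
      (node ts).edges = n ∧ (node ts).leaves = k ∧ (node ts).rootDegree = r := by
  simp only [mem_filter, mem_words, length_forestCode, sum_forestCode, count_zero_forestCode,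
    edges_node, leaves, rootDegree]
  constructor
  · rintro ⟨⟨hn, hs, hk⟩, -⟩
    exact ⟨by omega, hk, by omega⟩
  · rintro ⟨hn, hk, rfl⟩
    exact ⟨⟨by omega, by omega, hk⟩, dominating_forestCode ts⟩

theorem card_eq_card_filter_dominating {n k r : ℕ} (hr : r ≤ n) :
    Nat.card {T : PlaneTree // T.edges = n ∧ T.leaves = k ∧ T.rootDegree = r} =
      #((words n (n - r) k).filter (Dominating r)) := by
  have hinj : Function.Injective fun T => forestCode (children T) := by
    rintro ⟨ts⟩ ⟨us⟩ h
    exact congrArg node (forestCode_injective h)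
  have himage : (fun T => forestCode (children T)) ''
      {T : PlaneTree | T.edges = n ∧ T.leaves = k ∧ T.rootDegree = r} =
      ↑((words n (n - r) k).filter (Dominating r)) := by
    ext w
    constructor
    · rintro ⟨⟨ts⟩, hT, rfl⟩
      exact (forestCode_mem_filter_dominating_iff ts hr).2 hT
    · intro hw
      obtain ⟨hmem, hdom⟩ := mem_filter.1 hw
      obtain ⟨hl, hs, -⟩ := mem_words.1 hmem
      obtain ⟨ts, -, rfl⟩ := exists_forestCode_eq w r (by omega) hdom
      exact ⟨node ts, (forestCode_mem_filter_dominating_iff ts hr).1 hw, rfl⟩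
  rw [← Set.ncard_coe_finset, ← himage, Set.ncard_image_of_injective _ hinj]
  exact Nat.card_coe_set_eq _

end PlaneTree

/-- Counting plane trees on `n` edges with `k` leaves and root degree `r`:
for `n > k > r`, `n * T_n(k,r) = r * C(n,k) * C(n-r-1, n-k-1)`,
and for `n = k = r`, `T_n(k,r) = 1`. -/
theorem planeTree_count_leaves_root (n k r : ℕ) :
    (k < n → r < k →
      n * Nat.card {T : PlaneTree //
          T.edges = n ∧ T.leaves = k ∧ T.rootDegree = r} =
        r * (Nat.choose n k * Nat.choose (n - r - 1) (n - k - 1))) ∧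
    (n = k → k = r →
      Nat.card {T : PlaneTree //
          T.edges = n ∧ T.leaves = k ∧ T.rootDegree = r} = 1) := by
  constructor
  · intro hkn hrk
    obtain ⟨m, rfl⟩ : ∃ m, n = m + 1 := ⟨n - 1, by omega⟩
    obtain ⟨s, hs⟩ : ∃ s, m + 1 - r = s + 1 := ⟨m - r, by omega⟩
    rw [PlaneTree.card_eq_card_filter_dominating (by omega), mul_card_filter_dominating k (by omega),
      hs, card_words m s k (by omega)]
    congr 3
    omega
  · rintro rfl rfl
    rw [PlaneTree.card_eq_card_filter_dominating le_rfl, Nat.sub_self, words_zero, if_pos rfl,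
      filter_singleton, if_pos (by simp [Dominating]), card_singleton]
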